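/- arXiv:2410.05031 — 6 statements merged into one kernel-verified Lean document; each statement's English description precedes it below -/
import Mathlib

section
/- For all integers n ≥ 3, the Baxter numbers satisfy the recurrence (n+2)(n+3)·B_n = (7n²+7n−2)·B_{n−1} + 8(n−1)(n−2)·B_{n−2}. -/
open Finset

noncomputable def D (n k : ℕ) : ℝ :=
  if k = 0 then 0 else
    2 / (n * (n + 1) ^ 2) * (Nat.choose (n + 1) (k - 1)) *
      (Nat.choose (n + 1) k) * (Nat.choose (n + 1) (k + 1))

noncomputable def B (n : ℕ) : ℝ := if n = 0 then 1 else ∑ k ∈ Icc 1 n, D n k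

/-!
Up to the factor `2 / (n (n+1)²)`, the summand of `B n` is `C(n+1,k-1) C(n+1,k) C(n+1,k+1)`,
a hypergeometric term in `n` and `k`, so the recurrence follows by creative telescoping: the
combination `(n+2)(n+3) D n k - (7n²+7n-2) D (n-1) k - 8(n-1)(n-2) D (n-2) k` equals
`G n (k+1) - G n k` for an explicit rational multiple `G` of the summand. All terms involved are
rational multiples of a single product of three binomials, so this is a polynomial identity.
Summing over `k`, the right-hand side telescopes to boundary values of `G`, which vanish.
-/

theorem Nat.cast_choose_succ_right_mul (R : Type*) [CommRing R] (n k : ℕ) :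
    ((k : R) + 1) * n.choose (k + 1) = ((n : R) - k) * n.choose k := by
  rcases le_or_gt k n with hk | hk
  · have h := congrArg (Nat.cast : ℕ → R) (Nat.choose_succ_right_eq n k)
    push_cast [Nat.cast_sub hk] at h
    linear_combination h
  · rw [Nat.choose_eq_zero_of_lt hk, Nat.choose_eq_zero_of_lt (Nat.lt_succ_of_lt hk)]
    simp

theorem Nat.cast_choose_mul_succ (R : Type*) [CommRing R] (n k : ℕ) :
    ((n : R) + 1) * n.choose k = ((n : R) + 1 - k) * (n + 1).choose k := by
  rcases le_or_gt k (n + 1) with hk | hk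
  · have h := congrArg (Nat.cast : ℕ → R) (Nat.choose_mul_succ_eq n k)
    push_cast [Nat.cast_sub hk] at h
    linear_combination h
  · rw [Nat.choose_eq_zero_of_lt hk, Nat.choose_eq_zero_of_lt (by omega : n < k)]
    simp

noncomputable def chooseTriple (N k : ℕ) : ℝ :=
  N.choose k * N.choose (k + 1) * N.choose (k + 2)

theorem chooseTriple_eq_zero {N k : ℕ} (h : N < k + 2) : chooseTriple N k = 0 := by
  simp [chooseTriple, Nat.choose_eq_zero_of_lt h]

theorem chooseTriple_succ_right (N k : ℕ) :
    chooseTriple N (k + 1)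
      = ((N : ℝ) - k) * (N - k - 1) * (N - k - 2) / ((k + 1) * (k + 2) * (k + 3))
        * chooseTriple N k := by
  have h₀ := Nat.cast_choose_succ_right_mul ℝ N k
  have h₁ := Nat.cast_choose_succ_right_mul ℝ N (k + 1)
  have h₂ := Nat.cast_choose_succ_right_mul ℝ N (k + 2)
  simp only [chooseTriple, add_assoc, Nat.reduceAdd] at h₁ h₂ ⊢
  push_cast at h₁ h₂
  rw [div_mul_eq_mul_div, eq_div_iff (by positivity)]
  linear_combination ((k + 2 : ℝ) * N.choose (k + 2)) * ((k + 3) * N.choose (k + 3)) * h₀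
    + ((N - k : ℝ) * N.choose k) * ((k + 3) * N.choose (k + 3)) * h₁
    + ((N - k : ℝ) * N.choose k) * ((N - k - 1) * N.choose (k + 1)) * h₂

theorem chooseTriple_eq_mul_succ_left (N k : ℕ) :
    chooseTriple N k
      = ((N : ℝ) + 1 - k) * (N - k) * (N - k - 1) / (N + 1) ^ 3 * chooseTriple (N + 1) k := by
  have h₀ := Nat.cast_choose_mul_succ ℝ N k
  have h₁ := Nat.cast_choose_mul_succ ℝ N (k + 1)
  have h₂ := Nat.cast_choose_mul_succ ℝ N (k + 2)
  push_cast at h₁ h₂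
  simp only [chooseTriple]
  rw [div_mul_eq_mul_div, eq_div_iff (by positivity)]
  linear_combination ((N + 1 : ℝ) * N.choose (k + 1)) * ((N + 1) * N.choose (k + 2)) * h₀
    + ((N + 1 - k : ℝ) * (N + 1).choose k) * ((N + 1) * N.choose (k + 2)) * h₁
    + ((N + 1 - k : ℝ) * (N + 1).choose k) * ((N - k) * (N + 1).choose (k + 1)) * h₂

theorem D_succ (n k : ℕ) : D n (k + 1) = 2 / (n * (n + 1) ^ 2) * chooseTriple (n + 1) k := by
  simp [D, chooseTriple, mul_assoc]

theorem B_eq_sum_range {n : ℕ} (hn : n ≠ 0) {N : ℕ} (hN : n ≤ N) :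
    B n = ∑ j ∈ range N, D n (j + 1) := by
  have hD : ∀ j ∈ range N, j ∉ range n → D n (j + 1) = 0 := fun j _ hj => by
    rw [D_succ, chooseTriple_eq_zero (by simpa using hj), mul_zero]
  rw [← sum_subset (range_subset_range.mpr hN) hD, B, if_neg hn, range_eq_Ico,
    sum_Ico_add' (D n) 0 n 1, zero_add, Ico_add_one_right_eq_Icc]

/-- Zeilberger's certificate `G n k` for the recurrence, at the summation index `k = j + 1`. -/
noncomputable def baxterCert (n j : ℕ) : ℝ :=
  let k : ℝ := j + 1
  (8 * k ^ 6 - (36 * n + 24) * k ^ 5 + (54 * n ^ 2 + 78 * n + 8) * k ^ 4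
      - (28 * n ^ 3 + 64 * n ^ 2 - 8 * n - 24) * k ^ 3 - (54 * n ^ 2 + 78 * n + 16) * k ^ 2
      + (28 * n ^ 3 + 64 * n ^ 2 + 28 * n) * k) * chooseTriple (n + 1) j
    / (((n : ℝ) - 1) * n ^ 3 * (n + 1) ^ 3)

theorem baxterCert_zero (n : ℕ) : baxterCert n 0 = 0 := by
  simp only [baxterCert]
  ring

theorem baxterCert_self (n : ℕ) : baxterCert n n = 0 := by
  simp [baxterCert, chooseTriple_eq_zero (by omega : n + 1 < n + 2)]

theorem baxter_summand_telescopes {n : ℕ} (hn : 3 ≤ n) (j : ℕ) :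
    ((n : ℝ) + 2) * (n + 3) * D n (j + 1)
      - (7 * (n : ℝ) ^ 2 + 7 * n - 2) * D (n - 1) (j + 1)
      - 8 * ((n : ℝ) - 1) * (n - 2) * D (n - 2) (j + 1)
      = baxterCert n (j + 1) - baxterCert n j := by
  obtain ⟨m, rfl⟩ : ∃ m, n = m + 3 := ⟨n - 3, by omega⟩
  rw [show m + 3 - 1 = m + 2 by omega, show m + 3 - 2 = m + 1 by omega]
  simp only [D_succ, baxterCert, chooseTriple_succ_right, chooseTriple_eq_mul_succ_left (m + 2) j,
    chooseTriple_eq_mul_succ_left (m + 3) j, add_assoc, Nat.reduceAdd]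
  push_cast
  rw [show (m : ℝ) + 3 - 1 = m + 2 by ring]
  field_simp
  ring

theorem baxter_recurrence (n : ℕ) (hn : 3 ≤ n) :
    ((n : ℝ) + 2) * ((n : ℝ) + 3) * B n
      = (7 * (n : ℝ) ^ 2 + 7 * n - 2) * B (n - 1)
        + 8 * ((n : ℝ) - 1) * ((n : ℝ) - 2) * B (n - 2) := by
  have hB : ∀ i, i ≠ 0 → i ≤ n → B i = ∑ j ∈ range n, D i (j + 1) :=
    fun i h₀ hi => B_eq_sum_range h₀ hi
  rw [hB n (by omega) le_rfl, hB (n - 1) (by omega) (by omega), hB (n - 2) (by omega) (by omega),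
    mul_sum, mul_sum, mul_sum, ← sub_eq_zero, ← sum_add_distrib, ← sum_sub_distrib]
  calc _ = ∑ j ∈ range n, (baxterCert n (j + 1) - baxterCert n j) :=
        sum_congr rfl fun j _ => by rw [← baxter_summand_telescopes hn j]; ring
    _ = 0 := by rw [sum_range_sub, baxterCert_self, baxterCert_zero, sub_zero]
end

section
/- For every integer n ≥ 1 and all real x, the Baxter polynomial satisfies ℬ_n(x) = x · ∑_{k=0}^{n−1} (2/((k+1)²(k+2)))·C(n−1,k)·C(n,k)·C(n+1,k)·x^k. -/
open Finset

noncomputable def Bpoly (n : ℕ) (x : ℝ) : ℝ := ∑ k ∈ range (n + 1), D n k * x ^ k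

/-! The constant term of `ℬ_n` vanishes, and the remaining coefficients match after the
absorption identity `(k+1) C(m+1, k+1) = (m+1) C(m, k)` is applied three times:
to `C(n+2, j+1)`, to `C(n+2, j+2)`, and then to the resulting `C(n+1, j+1)`. -/

theorem Nat.choose_mul_choose_add_one_mul_choose_add_two (n j : ℕ) :
    (j + 1) ^ 2 * (j + 2) *
        ((n + 2).choose j * (n + 2).choose (j + 1) * (n + 2).choose (j + 2)) =
      (n + 1) * (n + 2) ^ 2 * (n.choose j * (n + 1).choose j * (n + 2).choose j) := by
  calc (j + 1) ^ 2 * (j + 2) *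
          ((n + 2).choose j * (n + 2).choose (j + 1) * (n + 2).choose (j + 2))
      = (n + 2).choose j * ((n + 2).choose (j + 1) * (j + 1)) *
          ((n + 2).choose (j + 1 + 1) * (j + 1 + 1)) * (j + 1) := by ring
    _ = (n + 2).choose j * ((n + 2) * (n + 1).choose j) *
          ((n + 2) * (n + 1).choose (j + 1)) * (j + 1) := by
        rw [← Nat.add_one_mul_choose_eq, ← Nat.add_one_mul_choose_eq]
    _ = (n + 2).choose j * ((n + 2) * (n + 1).choose j) * (n + 2) *
          ((n + 1).choose (j + 1) * (j + 1)) := by ring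
    _ = (n + 1) * (n + 2) ^ 2 * (n.choose j * (n + 1).choose j * (n + 2).choose j) := by
        rw [← Nat.add_one_mul_choose_eq]; ring

theorem D_succ_succ (n j : ℕ) :
    D (n + 1) (j + 1) = 2 / (((j : ℝ) + 1) ^ 2 * ((j : ℝ) + 2)) *
      (n.choose j) * ((n + 1).choose j) * ((n + 2).choose j) := by
  have key := congrArg (Nat.cast : ℕ → ℝ) (Nat.choose_mul_choose_add_one_mul_choose_add_two n j)
  push_cast at key
  rw [D, if_neg j.succ_ne_zero, Nat.add_sub_cancel, Nat.add_assoc n 1 1, Nat.add_assoc j 1 1]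
  push_cast
  field_simp
  linear_combination key

theorem baxter_poly_form2_general (n : ℕ) (x : ℝ) :
    Bpoly n x
      = x * ∑ k ∈ range n,
          2 / (((k : ℝ) + 1) ^ 2 * ((k : ℝ) + 2)) *
            (Nat.choose (n - 1) k) * (Nat.choose n k) * (Nat.choose (n + 1) k) * x ^ k := by
  cases n with
  | zero => simp [Bpoly, D]
  | succ n =>
    rw [Bpoly, sum_range_succ', D, if_pos rfl, zero_mul, add_zero, mul_sum]
    refine sum_congr rfl fun j _ => ?_
    rw [D_succ_succ, Nat.add_sub_cancel]
    ring

theorem baxter_poly_form2 (n : ℕ) (hn : 1 ≤ n) (x : ℝ) :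
    Bpoly n x
      = x * ∑ k ∈ range n,
          2 / (((k : ℝ) + 1) ^ 2 * ((k : ℝ) + 2)) *
            (Nat.choose (n - 1) k) * (Nat.choose n k) * (Nat.choose (n + 1) k) * x ^ k :=
  baxter_poly_form2_general n x
end

section
/- For every integer n ≥ 2, every root of the Baxter polynomial ℬ_n(x) is a nonpositive real number. -/
/-!
The coefficient of `X ^ (m + 1)` in `A * (X + x) ^ m` is `∑ₖ C(m, k) A_{k+1} x ^ k`; up to the
factor `(m + 1)!` it is the value at `0` of the `(m + 1)`-st derivative. By Gauss–Lucas, the roots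
of that derivative lie in the convex hull of `-x` and the roots of `A`. If all roots of `A` are
negative reals and `x` is not real, this hull misses `0`, so `∑ₖ C(m, k) A_{k+1} x ^ k ≠ 0`.

Taking `A = (X + 1) ^ m` shows that `∑ₖ C(m, k) C(m, k+1) x ^ k` has only real roots, hence
negative ones since its coefficients are nonnegative with positive constant term. Taking `A` to be
this polynomial shows the same for `∑ₖ C(m, k) C(m, k+1) C(m, k+2) x ^ k`, which for `m = n + 1`
is `ℬ_n(x) / x` up to a nonzero constant.
-/

open Finset

open Polynomial

namespace Polynomial

theorem rootSet_derivative_subset_of_convex {P : ℂ[X]} {K : Set ℂ} (hK : Convex ℝ K)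
    (hP : P.rootSet ℂ ⊆ K) : P.derivative.rootSet ℂ ⊆ K := by
  rcases le_or_gt P.degree 0 with hdeg | hdeg
  · simp [derivative_of_natDegree_zero (natDegree_eq_zero_iff_degree_le_zero.2 hdeg)]
  · exact (rootSet_derivative_subset_convexHull_rootSet hdeg).trans (convexHull_min hP hK)

theorem rootSet_iterate_derivative_subset_of_convex {P : ℂ[X]} {K : Set ℂ} (hK : Convex ℝ K)
    (hP : P.rootSet ℂ ⊆ K) (j : ℕ) : (derivative^[j] P).rootSet ℂ ⊆ K := by
  induction j with
  | zero => exact hP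
  | succ j ih =>
    rw [Function.iterate_succ_apply']
    exact rootSet_derivative_subset_of_convex hK ih

theorem iterate_derivative_ne_zero {R : Type*} [Semiring R] [Module.IsTorsionFree ℕ R]
    {p : R[X]} (hp : p ≠ 0) {k : ℕ} (hk : k ≤ p.natDegree) : derivative^[k] p ≠ 0 := by
  intro h
  have hcoeff := coeff_iterate_derivative (k := k) p (p.natDegree - k)
  rw [h, Nat.sub_add_cancel hk, coeff_zero, eq_comm, smul_eq_zero] at hcoeff
  rcases hcoeff with hfac | hlead
  · exact (Nat.descFactorial_eq_zero_iff_lt.1 hfac).not_ge hk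
  · exact leadingCoeff_ne_zero.2 hp hlead

theorem coeff_mul_X_add_C_pow_succ {R : Type*} [CommSemiring R] (A : R[X]) (m : ℕ) (x : R) :
    (A * (X + C x) ^ m).coeff (m + 1) =
      ∑ k ∈ range (m + 1), (m.choose k : R) * A.coeff (k + 1) * x ^ k := by
  rw [coeff_mul, Nat.sum_antidiagonal_eq_sum_range_succ_mk, sum_range_succ']
  dsimp only
  rw [coeff_X_add_C_pow, Nat.sub_zero, Nat.choose_succ_self, Nat.cast_zero, mul_zero, mul_zero,
    add_zero]
  refine sum_congr rfl fun k hk => ?_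
  have hk : k ≤ m := Nat.lt_succ_iff.1 (mem_range.1 hk)
  rw [coeff_X_add_C_pow, Nat.succ_sub_succ, Nat.sub_sub_self hk, Nat.choose_symm hk]
  ring

end Polynomial

open Complex in
theorem Complex.zero_notMem_convexHull_insert {p : ℂ} (hp : p.im ≠ 0) :
    (0 : ℂ) ∉ convexHull ℝ (insert p (ofReal '' Set.Iio 0)) := by
  have hconv : Convex ℝ (ofReal '' Set.Iio 0) :=
    (convex_Iio 0).linear_image ofRealCLM.toLinearMap
  rw [convexHull_insert (Set.nonempty_Iio.image _), hconv.convexHull_eq, mem_convexJoin]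
  rintro ⟨q, hq, _, ⟨r, hr, rfl⟩, a, b, -, -, hab, h⟩
  rw [Set.mem_singleton_iff] at hq
  subst hq
  have ha : a = 0 := by simpa [hp] using congrArg im h
  have hre : a * q.re + b * r = 0 := by simpa using congrArg re h
  rw [ha, zero_add] at hab
  rw [ha, hab] at hre
  linarith [Set.mem_Iio.1 hr]

theorem im_eq_zero_of_sum_choose_mul_coeff_eq_zero {A : ℂ[X]} (hA : 0 < A.natDegree)
    (hroots : A.rootSet ℂ ⊆ Complex.ofReal '' Set.Iio 0) (m : ℕ) {x : ℂ}
    (hx : ∑ k ∈ range (m + 1), (m.choose k : ℂ) * A.coeff (k + 1) * x ^ k = 0) :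
    x.im = 0 := by
  by_contra hx_im
  have hA0 : A ≠ 0 := ne_zero_of_natDegree_gt hA
  have hB0 : (X + C x) ^ m ≠ 0 := pow_ne_zero _ (X_add_C_ne_zero x)
  set φ := A * (X + C x) ^ m
  have hφ0 : φ ≠ 0 := mul_ne_zero hA0 hB0
  have hφroots : φ.rootSet ℂ ⊆ insert (-x) (Complex.ofReal '' Set.Iio 0) := by
    intro z hz
    rw [mem_rootSet_of_ne hφ0, coe_aeval_eq_eval, eval_mul, eval_pow, eval_add, eval_X, eval_C,
      mul_eq_zero] at hz
    rcases hz with hz | hz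
    · exact Or.inr (hroots ((mem_rootSet_of_ne hA0).2 hz))
    · exact Or.inl (eq_neg_of_add_eq_zero_left (pow_eq_zero_iff'.1 hz).1)
  have hdeg : m + 1 ≤ φ.natDegree := by
    rw [natDegree_mul hA0 hB0, natDegree_pow, natDegree_X_add_C]
    omega
  -- The constant coefficient of the `(m + 1)`-st derivative is `(m + 1)! • φ.coeff (m + 1)`.
  have h0 : (0 : ℂ) ∈ (derivative^[m + 1] φ).rootSet ℂ := by
    rw [mem_rootSet_of_ne (iterate_derivative_ne_zero hφ0 hdeg), coe_aeval_eq_eval,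
      ← coeff_zero_eq_eval_zero, coeff_iterate_derivative, zero_add, coeff_mul_X_add_C_pow_succ,
      hx, smul_zero]
  exact Complex.zero_notMem_convexHull_insert (by simpa using hx_im)
    (rootSet_iterate_derivative_subset_of_convex (convex_convexHull ℝ _)
      (hφroots.trans (subset_convexHull ℝ _)) (m + 1) h0)

theorem mem_ofReal_image_Iio_zero_of_sum_natCast_mul_pow_eq_zero {c : ℕ → ℕ} (hc : 0 < c 0)
    (N : ℕ) {x : ℂ} (hx_im : x.im = 0) (hx : ∑ k ∈ range (N + 1), (c k : ℂ) * x ^ k = 0) :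
    x ∈ Complex.ofReal '' Set.Iio 0 := by
  rw [← Complex.re_add_im x, hx_im, Complex.ofReal_zero, zero_mul, add_zero] at hx ⊢
  refine ⟨x.re, Set.mem_Iio.2 (not_le.1 fun hx_re => ?_), rfl⟩
  have hpos : 0 < ∑ k ∈ range (N + 1), (c k : ℝ) * x.re ^ k :=
    calc (0 : ℝ) < c 0 * x.re ^ 0 := by simpa using hc
      _ ≤ ∑ k ∈ range (N + 1), (c k : ℝ) * x.re ^ k :=
        single_le_sum (f := fun k => (c k : ℝ) * x.re ^ k) (fun k _ => by positivity) (by simp)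
  exact hpos.ne' (by exact_mod_cast hx)

theorem im_eq_zero_of_sum_choose_mul_choose_eq_zero {m : ℕ} (hm : 0 < m) {x : ℂ}
    (hx : ∑ k ∈ range (m + 1), (m.choose k : ℂ) * m.choose (k + 1) * x ^ k = 0) :
    x.im = 0 := by
  refine im_eq_zero_of_sum_choose_mul_coeff_eq_zero (A := (X + C 1) ^ m) ?_ ?_ m ?_
  · rwa [natDegree_pow, natDegree_X_add_C, mul_one]
  · intro z hz
    rw [mem_rootSet_of_ne (pow_ne_zero _ (X_add_C_ne_zero 1)), coe_aeval_eq_eval, eval_pow,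
      eval_add, eval_X, eval_C, pow_eq_zero_iff hm.ne', add_eq_zero_iff_eq_neg] at hz
    exact ⟨-1, Set.mem_Iio.2 neg_one_lt_zero, by simp [hz]⟩
  · simpa only [coeff_X_add_C_pow, one_pow, one_mul] using hx

noncomputable def chooseMulChoosePoly (m : ℕ) : ℂ[X] :=
  ∑ k ∈ range (m + 1), monomial k ((m.choose k : ℂ) * m.choose (k + 1))

theorem coeff_chooseMulChoosePoly (m j : ℕ) :
    (chooseMulChoosePoly m).coeff j = (m.choose j : ℂ) * m.choose (j + 1) := by
  rw [chooseMulChoosePoly, finsetSum_coeff]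
  simp only [coeff_monomial, sum_ite_eq', mem_range]
  split_ifs with hj
  · rfl
  · rw [Nat.choose_eq_zero_of_lt (by omega), Nat.cast_zero, zero_mul]

theorem eval_chooseMulChoosePoly (m : ℕ) (x : ℂ) :
    (chooseMulChoosePoly m).eval x =
      ∑ k ∈ range (m + 1), (m.choose k : ℂ) * m.choose (k + 1) * x ^ k := by
  simp [chooseMulChoosePoly, eval_finsetSum]

theorem natDegree_chooseMulChoosePoly_pos {m : ℕ} (hm : 2 ≤ m) :
    0 < (chooseMulChoosePoly m).natDegree := by
  have hcoeff : (chooseMulChoosePoly m).coeff (m - 1) ≠ 0 := by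
    rw [coeff_chooseMulChoosePoly, Nat.sub_add_cancel (by omega), Nat.choose_self,
      Nat.choose_symm_of_eq_add (show m = m - 1 + 1 by omega), Nat.choose_one_right,
      Nat.cast_one, mul_one, Nat.cast_ne_zero]
    omega
  exact lt_of_lt_of_le (by omega) (le_natDegree_of_ne_zero hcoeff)

theorem rootSet_chooseMulChoosePoly_subset {m : ℕ} (hm : 0 < m) :
    (chooseMulChoosePoly m).rootSet ℂ ⊆ Complex.ofReal '' Set.Iio 0 := by
  intro z hz
  have hz : ∑ k ∈ range (m + 1), (m.choose k : ℂ) * m.choose (k + 1) * z ^ k = 0 := by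
    rw [← eval_chooseMulChoosePoly]
    exact (mem_rootSet.1 hz).2
  exact mem_ofReal_image_Iio_zero_of_sum_natCast_mul_pow_eq_zero
    (c := fun k => m.choose k * m.choose (k + 1)) (by simpa using hm) m
    (im_eq_zero_of_sum_choose_mul_choose_eq_zero hm hz) (by push_cast; exact hz)

theorem im_eq_zero_of_sum_choose_mul_choose_mul_choose_eq_zero {m : ℕ} (hm : 2 ≤ m) {x : ℂ}
    (hx : ∑ k ∈ range (m + 1),
      (m.choose k : ℂ) * m.choose (k + 1) * m.choose (k + 2) * x ^ k = 0) :
    x.im = 0 :=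
  im_eq_zero_of_sum_choose_mul_coeff_eq_zero (natDegree_chooseMulChoosePoly_pos hm)
    (rootSet_chooseMulChoosePoly_subset (by omega)) m
    (by simpa only [coeff_chooseMulChoosePoly, mul_assoc] using hx)

theorem sum_D_mul_pow_eq (n : ℕ) (z : ℂ) :
    ∑ k ∈ range (n + 1), (D n k : ℂ) * z ^ k =
      2 / (n * (n + 1) ^ 2) * z * ∑ k ∈ range (n + 1 + 1),
        ((n + 1).choose k : ℂ) * (n + 1).choose (k + 1) * (n + 1).choose (k + 2) * z ^ k := by
  have hvanish : ∀ k, n ≤ k → (n + 1).choose (k + 2) = 0 := fun k hk =>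
    Nat.choose_eq_zero_of_lt (by omega)
  rw [sum_range_succ', sum_range_succ _ (n + 1), sum_range_succ _ n, hvanish n le_rfl,
    hvanish (n + 1) (by omega)]
  simp only [D, Nat.add_one_ne_zero, ↓reduceIte, Nat.add_sub_cancel, Complex.ofReal_zero,
    Nat.cast_zero, mul_zero, zero_mul, add_zero, mul_sum]
  refine sum_congr rfl fun k _ => ?_
  push_cast
  ring

theorem baxter_poly_roots_nonpos_real (n : ℕ) (hn : 2 ≤ n) (z : ℂ)
    (hz : ∑ k ∈ range (n + 1), (D n k : ℂ) * z ^ k = 0) :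
    ∃ r : ℝ, r ≤ 0 ∧ z = (r : ℂ) := by
  obtain rfl | hz0 := eq_or_ne z 0
  · exact ⟨0, le_rfl, Complex.ofReal_zero.symm⟩
  have hc : (2 / (n * (n + 1) ^ 2) : ℂ) ≠ 0 :=
    div_ne_zero two_ne_zero (mul_ne_zero (Nat.cast_ne_zero.2 (by omega))
      (pow_ne_zero _ (Nat.cast_add_one_ne_zero n)))
  rw [sum_D_mul_pow_eq, mul_eq_zero, mul_eq_zero] at hz
  simp only [hc, hz0, or_self, false_or] at hz
  have him := im_eq_zero_of_sum_choose_mul_choose_mul_choose_eq_zero (by omega) hz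
  have hc0 : 0 < (n + 1).choose 0 * (n + 1).choose 1 * (n + 1).choose 2 :=
    Nat.mul_pos (Nat.mul_pos (Nat.choose_pos (Nat.zero_le _)) (Nat.choose_pos (by omega)))
      (Nat.choose_pos (by omega))
  obtain ⟨r, hr, rfl⟩ := mem_ofReal_image_Iio_zero_of_sum_natCast_mul_pow_eq_zero
    (c := fun k => (n + 1).choose k * (n + 1).choose (k + 1) * (n + 1).choose (k + 2)) hc0 (n + 1)
    him (by push_cast; exact hz)
  exact ⟨r, le_of_lt hr, rfl⟩
end

section
/- Let g_n = ∑_{k=0}^{n} k·D_{n,k}, where D_{n,k} = (2/(n(n+1)²))·C(n+1,k−1)·C(n+1,k)·C(n+1,k+1). Then g_{n+1}/g_n converges to 8 as n → ∞. -/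
open Finset

noncomputable def g (n : ℕ) : ℝ := ∑ k ∈ range (n + 1), (k : ℝ) * D n k

/-!
Write `S m = ∑ⱼ C(m,j) C(m,j+1) C(m,j+2)`. Pairing `k` with `n + 1 - k` gives
`g n = S (n+1) / (n (n+1))`, so it suffices that `S (m+1) / S m → 8`.
Expanding each factor of `S (m+1)` by Pascal's rule gives eight sums of the shape of `S m`,
each with some indices shifted by one. A row of binomial coefficients is unimodal, so its
total variation is at most `2K` with `K = C(m, ⌊m/2⌋)`, and a unit shift changes such a sum by
at most `2K³`; hence `S (m+1) = 8 S m + O(K³)`. On the other hand `C(m, ⌊m/2⌋ + i) ≥ K/2` as long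
as `4i² ≤ m`, so `S m` is at least of order `√m K³` and the error is negligible.
-/

open Filter Topology

theorem sum_range_abs_sub_le_of_unimodal {f : ℕ → ℝ} (hf : ∀ j, 0 ≤ f j) {h : ℕ}
    (hup : ∀ j < h, f j ≤ f (j + 1)) (hdown : ∀ j, h ≤ j → f (j + 1) ≤ f j) (N : ℕ) :
    ∑ j ∈ range N, |f (j + 1) - f j| ≤ 2 * f h := by
  have hrise : ∑ j ∈ range h, |f (j + 1) - f j| = f h - f 0 := by
    rw [← sum_range_sub]
    exact sum_congr rfl fun j hj => abs_of_nonneg (sub_nonneg.2 (hup j (mem_range.1 hj)))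
  have hfall : ∑ j ∈ range N, |f (h + j + 1) - f (h + j)| = f h - f (h + N) := by
    have htel := sum_range_sub' (fun j => f (h + j)) N
    rw [add_zero] at htel
    rw [← htel]
    exact sum_congr rfl fun j _ => by
      rw [abs_of_nonpos (sub_nonpos.2 (hdown _ (by omega))), neg_sub, add_assoc]
  calc ∑ j ∈ range N, |f (j + 1) - f j| ≤ ∑ j ∈ range (h + N), |f (j + 1) - f j| :=
        sum_le_sum_of_subset_of_nonneg (range_mono (Nat.le_add_left _ _))
          fun _ _ _ => abs_nonneg _
    _ = (f h - f 0) + (f h - f (h + N)) := by rw [sum_range_add, hrise, hfall]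
    _ ≤ 2 * f h := by linarith [hf 0, hf (h + N)]

theorem Nat.choose_succ_le_of_half_le {m j : ℕ} (h : m / 2 ≤ j) :
    m.choose (j + 1) ≤ m.choose j :=
  Nat.le_of_mul_le_mul_right
    (by rw [Nat.choose_succ_right_eq]; exact Nat.mul_le_mul_left _ (by omega)) j.succ_pos

theorem sum_range_abs_choose_succ_sub_le (m N : ℕ) :
    ∑ j ∈ range N, |(m.choose (j + 1) : ℝ) - m.choose j| ≤ 2 * m.choose (m / 2) :=
  sum_range_abs_sub_le_of_unimodal (fun _ => Nat.cast_nonneg _)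
    (fun _ hj => by exact_mod_cast Nat.choose_le_succ_of_lt_half_left hj)
    (fun _ hj => by exact_mod_cast Nat.choose_succ_le_of_half_le hj) N

theorem Nat.succ_choose_le_two_mul_choose_half (m j : ℕ) :
    (m + 1).choose j ≤ 2 * m.choose (m / 2) := by
  cases j with
  | zero => have := Nat.choose_pos (Nat.div_le_self m 2); simp; omega
  | succ j =>
    rw [Nat.choose_succ_succ, two_mul]
    exact Nat.add_le_add (Nat.choose_le_middle _ _) (Nat.choose_le_middle _ _)

theorem sub_sq_mul_choose_half_le (m i : ℕ) (hi : i ≤ m / 2) :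
    (((m / 2 : ℕ) : ℝ) - (i : ℝ) ^ 2) * m.choose (m / 2) ≤
      (m / 2 : ℕ) * m.choose (m / 2 + i) := by
  induction i with
  | zero => simp
  | succ i ih =>
    set c := m / 2
    set K : ℝ := (m.choose c : ℝ)
    set a : ℝ := (m.choose (c + i) : ℝ)
    set b : ℝ := (m.choose (c + i + 1) : ℝ)
    have hm : (m : ℝ) ≤ 2 * c + 1 := by exact_mod_cast (by omega : m ≤ 2 * c + 1)
    have hm' : 2 * (c : ℝ) ≤ m := by exact_mod_cast (by omega : 2 * c ≤ m)
    have hstep : b * ((c : ℝ) + i + 1) = a * (m - (c + i)) := by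
      have h : ((m.choose (c + i + 1) * (c + i + 1) : ℕ) : ℝ) =
          (m.choose (c + i) * (m - (c + i)) : ℕ) := by
        rw [Nat.choose_succ_right_eq]
      push_cast [Nat.cast_sub (by omega : c + i ≤ m)] at h
      exact h
    have hK : a ≤ K := Nat.cast_le.2 (Nat.choose_le_middle _ _)
    have ha : 0 ≤ a := Nat.cast_nonneg _
    have hi : (0 : ℝ) ≤ i := Nat.cast_nonneg _
    have hdiff : ((c : ℝ) + i + 1) * (a - b) = (2 * (c + i) + 1 - m) * a := by
      linear_combination -hstep
    have hba : b ≤ a := by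
      have : 0 ≤ ((c : ℝ) + i + 1) * (a - b) := hdiff ▸ mul_nonneg (by linarith) ha
      linarith [(mul_nonneg_iff_of_pos_left (by positivity)).1 this]
    have hdrop : (c : ℝ) * (a - b) ≤ ((c : ℝ) + i + 1) * (a - b) :=
      mul_le_mul_of_nonneg_right (by linarith) (sub_nonneg.2 hba)
    have hbound : (2 * (c + i) + 1 - m) * a ≤ (2 * (i : ℝ) + 1) * K :=
      mul_le_mul (by linarith) hK ha (by positivity)
    have ih := ih (by omega)
    push_cast
    rw [← add_assoc]
    nlinarith

theorem half_choose_half_le_choose_half_add {m i : ℕ} (hi : 2 * i ^ 2 ≤ m / 2) :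
    (m.choose (m / 2) : ℝ) / 2 ≤ m.choose (m / 2 + i) := by
  rcases Nat.eq_zero_or_pos i with rfl | hpos
  · simp [(Nat.cast_nonneg _ : (0 : ℝ) ≤ _)]
  have hc : (0 : ℝ) < (m / 2 : ℕ) := by exact_mod_cast (by nlinarith : 0 < m / 2)
  have hi' : 2 * (i : ℝ) ^ 2 ≤ (m / 2 : ℕ) := by exact_mod_cast hi
  have hlow := sub_sq_mul_choose_half_le m i (by nlinarith)
  have hK : (0 : ℝ) ≤ m.choose (m / 2) := Nat.cast_nonneg _
  refine le_of_mul_le_mul_left ?_ hc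
  nlinarith

noncomputable def chooseTripleSum (m u v w : ℕ) : ℝ :=
  ∑ j ∈ range (m + 1), (m.choose (j + u) : ℝ) * m.choose (j + v) * m.choose (j + w)

theorem chooseTripleSum_swap_right (m u v w : ℕ) :
    chooseTripleSum m u v w = chooseTripleSum m u w v :=
  sum_congr rfl fun _ _ => by ring

theorem chooseTripleSum_rotate (m u v w : ℕ) :
    chooseTripleSum m u v w = chooseTripleSum m v w u :=
  sum_congr rfl fun _ _ => by ring

theorem abs_chooseTripleSum_succ_sub (m u v w : ℕ) :
    |chooseTripleSum m u v (w + 1) - chooseTripleSum m u v w| ≤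
      2 * (m.choose (m / 2) : ℝ) ^ 3 := by
  set K : ℝ := (m.choose (m / 2) : ℝ)
  have hle : ∀ k, (m.choose k : ℝ) ≤ K := fun k => Nat.cast_le.2 (Nat.choose_le_middle _ _)
  have hvar :
      ∑ j ∈ range (m + 1), |(m.choose (j + w + 1) : ℝ) - m.choose (j + w)| ≤ 2 * K := by
    calc _ = ∑ j ∈ Ico w (w + (m + 1)), |(m.choose (j + 1) : ℝ) - m.choose j| := by
          rw [sum_Ico_eq_sum_range, add_tsub_cancel_left]
          exact sum_congr rfl fun j _ => by rw [add_comm w j]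
      _ ≤ ∑ j ∈ range (w + (m + 1)), |(m.choose (j + 1) : ℝ) - m.choose j| :=
          sum_le_sum_of_subset_of_nonneg (fun j hj => mem_range.2 (mem_Ico.1 hj).2)
            fun _ _ _ => abs_nonneg _
      _ ≤ 2 * K := sum_range_abs_choose_succ_sub_le m _
  calc |chooseTripleSum m u v (w + 1) - chooseTripleSum m u v w|
      = |∑ j ∈ range (m + 1), (m.choose (j + u) : ℝ) * m.choose (j + v) *
          (m.choose (j + w + 1) - m.choose (j + w))| := by
        rw [chooseTripleSum, chooseTripleSum, ← sum_sub_distrib]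
        exact congrArg _ (sum_congr rfl fun j _ => by rw [← add_assoc]; ring)
    _ ≤ ∑ j ∈ range (m + 1), K * K * |(m.choose (j + w + 1) : ℝ) - m.choose (j + w)| := by
        refine (abs_sum_le_sum_abs _ _).trans (sum_le_sum fun j _ => ?_)
        rw [abs_mul, abs_mul, abs_of_nonneg (Nat.cast_nonneg (m.choose (j + u))),
          abs_of_nonneg (Nat.cast_nonneg (m.choose (j + v)))]
        gcongr
        exacts [hle _, hle _]
    _ ≤ K * K * (2 * K) := by rw [← mul_sum]; gcongr
    _ = 2 * K ^ 3 := by ring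

theorem abs_chooseTripleSum_add_right_sub (m u v w c : ℕ) :
    |chooseTripleSum m u v (w + c) - chooseTripleSum m u v w| ≤
      2 * c * (m.choose (m / 2) : ℝ) ^ 3 := by
  induction c with
  | zero => simp
  | succ c ih =>
    calc _ ≤ |chooseTripleSum m u v (w + c + 1) - chooseTripleSum m u v (w + c)| +
          |chooseTripleSum m u v (w + c) - chooseTripleSum m u v w| := abs_sub_le _ _ _
      _ ≤ _ := by
        push_cast
        linarith [abs_chooseTripleSum_succ_sub m u v (w + c)]

theorem abs_chooseTripleSum_add_sub (m u v w a b c : ℕ) :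
    |chooseTripleSum m (u + a) (v + b) (w + c) - chooseTripleSum m u v w| ≤
      2 * (a + b + c) * (m.choose (m / 2) : ℝ) ^ 3 := by
  have hw := abs_chooseTripleSum_add_right_sub m (u + a) (v + b) w c
  have hv := abs_chooseTripleSum_add_right_sub m (u + a) w v b
  have hu := abs_chooseTripleSum_add_right_sub m v w u a
  rw [chooseTripleSum_swap_right m (u + a) w, chooseTripleSum_swap_right m (u + a) w] at hv
  rw [← chooseTripleSum_rotate m (u + a), ← chooseTripleSum_rotate m u] at hu
  have h1 := abs_sub_le (chooseTripleSum m (u + a) (v + b) (w + c))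
    (chooseTripleSum m (u + a) (v + b) w) (chooseTripleSum m u v w)
  have h2 := abs_sub_le (chooseTripleSum m (u + a) (v + b) w)
    (chooseTripleSum m (u + a) v w) (chooseTripleSum m u v w)
  linarith

theorem chooseTripleSum_succ (m : ℕ) :
    chooseTripleSum (m + 1) 0 1 2 = ((m + 1).choose 1 : ℝ) * (m + 1).choose 2 +
      (chooseTripleSum m 0 1 2 + chooseTripleSum m 0 1 3 + chooseTripleSum m 0 2 2 +
        chooseTripleSum m 0 2 3 + chooseTripleSum m 1 1 2 + chooseTripleSum m 1 1 3 +
        chooseTripleSum m 1 2 2 + chooseTripleSum m 1 2 3) := by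
  simp only [chooseTripleSum, ← sum_add_distrib]
  rw [sum_range_succ', add_comm]
  congr 1
  · simp
  · refine sum_congr rfl fun j _ => ?_
    simp only [add_assoc, Nat.reduceAdd, Nat.choose_succ_succ', Nat.cast_add]
    ring_nf

theorem abs_chooseTripleSum_succ_sub_eight_mul_le (m : ℕ) :
    |chooseTripleSum (m + 1) 0 1 2 - 8 * chooseTripleSum m 0 1 2| ≤
      28 * (m.choose (m / 2) : ℝ) ^ 3 := by
  have hedge :
      ((m + 1).choose 1 : ℝ) * (m + 1).choose 2 ≤ 4 * (m.choose (m / 2) : ℝ) ^ 3 := by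
    have hK : (1 : ℝ) ≤ m.choose (m / 2) :=
      Nat.one_le_cast.2 (Nat.choose_pos (Nat.div_le_self m 2))
    have h1 : ((m + 1).choose 1 : ℝ) ≤ 2 * m.choose (m / 2) := by
      exact_mod_cast Nat.succ_choose_le_two_mul_choose_half m 1
    have h2 : ((m + 1).choose 2 : ℝ) ≤ 2 * m.choose (m / 2) := by
      exact_mod_cast Nat.succ_choose_le_two_mul_choose_half m 2
    calc _ ≤ (2 * (m.choose (m / 2) : ℝ)) * (2 * m.choose (m / 2)) := by gcongr
      _ ≤ _ := by nlinarith
  have hedge0 : (0 : ℝ) ≤ ((m + 1).choose 1 : ℝ) * (m + 1).choose 2 := by positivity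
  have step := abs_chooseTripleSum_add_sub m 0 1 2
  have h013 := step 0 0 1
  have h022 := step 0 1 0
  have h023 := step 0 1 1
  have h112 := step 1 0 0
  have h113 := step 1 0 1
  have h122 := step 1 1 0
  have h123 := step 1 1 1
  norm_num at h013 h022 h023 h112 h113 h122 h123
  rw [chooseTripleSum_succ, abs_le]
  constructor <;> linarith [abs_le.mp h013, abs_le.mp h022, abs_le.mp h023, abs_le.mp h112,
    abs_le.mp h113, abs_le.mp h122, abs_le.mp h123]

theorem mul_cube_le_chooseTripleSum {m i : ℕ} (hi : 2 * (i + 1) ^ 2 ≤ m / 2) :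
    (i : ℝ) * ((m.choose (m / 2) : ℝ) / 2) ^ 3 ≤ chooseTripleSum m 0 1 2 := by
  have hcentral : ∀ t ≤ i + 1, (m.choose (m / 2) : ℝ) / 2 ≤ m.choose (m / 2 + t) := fun t ht =>
    half_choose_half_le_choose_half_add (le_trans (by gcongr) hi)
  have hK : (0 : ℝ) ≤ (m.choose (m / 2) : ℝ) / 2 := by positivity
  have hi' : i + 1 ≤ (i + 1) ^ 2 := Nat.le_self_pow two_ne_zero _
  let f : ℕ → ℝ := fun j => (m.choose (j + 0) : ℝ) * m.choose (j + 1) * m.choose (j + 2)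
  calc (i : ℝ) * ((m.choose (m / 2) : ℝ) / 2) ^ 3
      ≤ ∑ j ∈ range i, f (m / 2 + j) := by
        have := card_nsmul_le_sum (range i) (fun j => f (m / 2 + j))
          (((m.choose (m / 2) : ℝ) / 2) ^ 3) fun j hj => by
          have hj := mem_range.1 hj
          simp only [f, add_zero, add_assoc]
          rw [pow_three']
          gcongr
          exacts [hcentral j (by omega), hcentral (j + 1) (by omega), hcentral (j + 2) (by omega)]
        simpa using this
    _ = ∑ j ∈ Ico (m / 2) (m / 2 + i), f j := by rw [sum_Ico_eq_sum_range, add_tsub_cancel_left]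
    _ ≤ ∑ j ∈ range (m + 1), f j :=
        sum_le_sum_of_subset_of_nonneg
          (fun j hj => mem_range.2 (by have := mem_Ico.1 hj; omega))
          fun _ _ _ => by positivity

theorem tendsto_chooseTripleSum_div_cube_atTop :
    Tendsto (fun m => chooseTripleSum m 0 1 2 / (m.choose (m / 2) : ℝ) ^ 3) atTop atTop := by
  refine tendsto_atTop_atTop.2 fun b => ⟨4 * (⌈8 * b⌉₊ + 1) ^ 2 + 2, fun m hm => ?_⟩
  have hK : (0 : ℝ) < (m.choose (m / 2) : ℝ) ^ 3 := by
    have := Nat.choose_pos (Nat.div_le_self m 2)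
    positivity
  have hlow := mul_cube_le_chooseTripleSum (m := m) (i := ⌈8 * b⌉₊) (by omega)
  have hb : b * (m.choose (m / 2) : ℝ) ^ 3 ≤ (⌈8 * b⌉₊ / 8 : ℝ) * (m.choose (m / 2) : ℝ) ^ 3 :=
    mul_le_mul_of_nonneg_right (by linarith [Nat.le_ceil (8 * b)]) hK.le
  rw [le_div_iff₀ hK]
  linarith

theorem tendsto_chooseTripleSum_succ_div :
    Tendsto (fun m => chooseTripleSum (m + 1) 0 1 2 / chooseTripleSum m 0 1 2) atTop (𝓝 8) := by
  have hQ := tendsto_chooseTripleSum_div_cube_atTop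
  have hbound : ∀ᶠ m in atTop, ‖chooseTripleSum (m + 1) 0 1 2 / chooseTripleSum m 0 1 2 - 8‖ ≤
      28 / (chooseTripleSum m 0 1 2 / (m.choose (m / 2) : ℝ) ^ 3) := by
    filter_upwards [hQ.eventually_gt_atTop 0] with m hm
    have hK : (0 : ℝ) < (m.choose (m / 2) : ℝ) ^ 3 := by
      have := Nat.choose_pos (Nat.div_le_self m 2)
      positivity
    have hS := (div_pos_iff_of_pos_right hK).1 hm
    rw [Real.norm_eq_abs, div_div_eq_mul_div, div_sub' hS.ne', mul_comm _ (8 : ℝ), abs_div,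
      abs_of_pos hS]
    exact div_le_div_of_nonneg_right (abs_chooseTripleSum_succ_sub_eight_mul_le m) hS.le
  exact tendsto_sub_nhds_zero_iff.1
    (squeeze_zero_norm' hbound (tendsto_const_nhds.div_atTop hQ))

theorem two_mul_sum_range_succ_mul_of_reflect {p : ℕ → ℝ} {n : ℕ}
    (hp : ∀ j < n, p (n - 1 - j) = p j) :
    2 * ∑ j ∈ range n, ((j : ℝ) + 1) * p j = (n + 1) * ∑ j ∈ range n, p j := by
  have hrefl : ∑ j ∈ range n, ((j : ℝ) + 1) * p j = ∑ j ∈ range n, ((n : ℝ) - j) * p j := by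
    rw [← sum_range_reflect]
    refine sum_congr rfl fun j hj => ?_
    have hj := mem_range.1 hj
    rw [hp j hj, Nat.cast_sub (by omega), Nat.cast_sub (by omega)]
    push_cast
    ring
  rw [two_mul]
  nth_rw 2 [hrefl]
  rw [← sum_add_distrib, mul_sum]
  exact sum_congr rfl fun j _ => by ring

theorem g_eq_chooseTripleSum_div (n : ℕ) :
    g n = chooseTripleSum (n + 1) 0 1 2 / (n * (n + 1)) := by
  let p : ℕ → ℝ := fun j =>
    ((n + 1).choose j : ℝ) * (n + 1).choose (j + 1) * (n + 1).choose (j + 2)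
  have hp : ∀ j < n, p (n - 1 - j) = p j := fun j hj => by
    simp only [p]
    rw [show n - 1 - j + 1 = n + 1 - (j + 1) by omega, show n - 1 - j + 2 = n + 1 - j by omega,
      show n - 1 - j = n + 1 - (j + 2) by omega, Nat.choose_symm (by omega),
      Nat.choose_symm (by omega), Nat.choose_symm (by omega)]
    ring
  have hg : g n = 2 / (n * (n + 1) ^ 2) * ∑ j ∈ range n, ((j : ℝ) + 1) * p j := by
    rw [g, sum_range_succ', mul_sum]
    simp [D, p]
    refine sum_congr rfl fun j _ => by ring
  have hS : chooseTripleSum (n + 1) 0 1 2 = ∑ j ∈ range n, p j := by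
    rw [chooseTripleSum, sum_range_succ, sum_range_succ]
    simp [p, Nat.choose_eq_zero_of_lt]
  have hsymm := two_mul_sum_range_succ_mul_of_reflect hp
  rw [hg, hS, div_mul_eq_mul_div, hsymm,
    show (n : ℝ) * (n + 1) ^ 2 = (n + 1) * (n * (n + 1)) by ring,
    mul_div_mul_left _ _ (by positivity)]

theorem g_succ_div_g_eq (n : ℕ) :
    g (n + 1) / g n =
      chooseTripleSum (n + 2) 0 1 2 / chooseTripleSum (n + 1) 0 1 2 * (n / (n + 2)) := by
  set S₁ := chooseTripleSum (n + 1) 0 1 2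
  set S₂ := chooseTripleSum (n + 2) 0 1 2
  rw [g_eq_chooseTripleSum_div, g_eq_chooseTripleSum_div, div_div_div_eq, div_mul_div_comm]
  push_cast
  rw [show S₂ * (n * (n + 1)) = (n + 1) * (S₂ * n) by ring,
    show ((n : ℝ) + 1) * (n + 1 + 1) * S₁ = (n + 1) * (S₁ * (n + 2)) by ring,
    mul_div_mul_left _ _ (by positivity)]

theorem baxter_deriv_ratio_limit :
    Filter.Tendsto (fun n : ℕ => g (n + 1) / g n) Filter.atTop (nhds 8) := by
  have hlim := (tendsto_chooseTripleSum_succ_div.comp (tendsto_add_atTop_nat 1)).mul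
    (tendsto_natCast_div_add_atTop (2 : ℝ))
  rw [mul_one] at hlim
  exact hlim.congr fun n => (g_succ_div_g_eq n).symm
end

section
/- The second factorial moment ratio ℬ_n''(1)/(n²·ℬ_n(1)) converges to 1/4 as n → ∞. -/
open Finset

noncomputable def h (n : ℕ) : ℝ := ∑ k ∈ range (n + 1), (k : ℝ) * ((k : ℝ) - 1) * D n k


/-!
Normalised by its total mass, `D n` is a law on `1 ≤ k ≤ n` symmetric about `(n + 1) / 2`, so the
claim is that its variance is `o(n²)`. Symmetry alone gives the lower bound. For the upper bound,
the recurrence `(n+2)³ u n k = k(k+1)(k+2) u (n+1) (k+1)` for the unnormalised weights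
`u = tripleChoose`, together with symmetry, expresses the second factorial moment at `n + 1`
through the ratio `T n / T (n+1)` of the total masses `T n = weightedSum n 1`. Comparing that
recurrence with its mirror image `(n+2)³ u n k = (n+1-k)(n+2-k)(n+3-k) u (n+1) k` and applying
AM–GM to the two cubic factors bounds this ratio by `(n+3)³ / (8 (n+2)³)`; the moment ratio is then
within `1/n` of `1/4`.
-/

def tripleChoose (n k : ℕ) : ℕ :=
  (n + 1).choose (k - 1) * (n + 1).choose k * (n + 1).choose (k + 1)

lemma tripleChoose_reflect {n k : ℕ} (hk : 1 ≤ k) (hkn : k ≤ n) :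
    tripleChoose n (n + 1 - k) = tripleChoose n k := by
  unfold tripleChoose
  rw [show n + 1 - k - 1 = n + 1 - (k + 1) by omega, show n + 1 - k + 1 = n + 1 - (k - 1) by omega,
    Nat.choose_symm (by omega), Nat.choose_symm (by omega), Nat.choose_symm (by omega)]
  ring

lemma cube_mul_tripleChoose_eq_succ_succ (n : ℕ) {k : ℕ} (hk : 1 ≤ k) :
    (n + 2) ^ 3 * tripleChoose n k = k * (k + 1) * (k + 2) * tripleChoose (n + 1) (k + 1) := by
  obtain ⟨j, rfl⟩ : ∃ j, k = j + 1 := ⟨k - 1, by omega⟩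
  have h₀ := Nat.add_one_mul_choose_eq (n + 1) j
  have h₁ := Nat.add_one_mul_choose_eq (n + 1) (j + 1)
  have h₂ := Nat.add_one_mul_choose_eq (n + 1) (j + 2)
  simp only [tripleChoose, Nat.add_sub_cancel]
  calc (n + 2) ^ 3 * ((n + 1).choose j * (n + 1).choose (j + 1) * (n + 1).choose (j + 1 + 1))
      = ((n + 1 + 1) * (n + 1).choose j) * ((n + 1 + 1) * (n + 1).choose (j + 1)) *
          ((n + 1 + 1) * (n + 1).choose (j + 2)) := by ring
    _ = _ := by rw [h₀, h₁, h₂]; ring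

lemma cube_mul_tripleChoose_eq_succ (n : ℕ) {k : ℕ} (hk : 1 ≤ k) :
    (n + 2) ^ 3 * tripleChoose n k =
      (n + 1 - k) * (n + 2 - k) * (n + 3 - k) * tripleChoose (n + 1) k := by
  have h₀ := Nat.choose_mul_succ_eq (n + 1) (k - 1)
  have h₁ := Nat.choose_mul_succ_eq (n + 1) k
  have h₂ := Nat.choose_mul_succ_eq (n + 1) (k + 1)
  rw [show n + 1 + 1 - (k - 1) = n + 3 - k by omega] at h₀
  rw [show n + 1 + 1 - (k + 1) = n + 1 - k by omega] at h₂
  simp only [tripleChoose]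
  calc (n + 2) ^ 3 * ((n + 1).choose (k - 1) * (n + 1).choose k * (n + 1).choose (k + 1))
      = ((n + 1).choose (k - 1) * (n + 1 + 1)) * ((n + 1).choose k * (n + 1 + 1)) *
          ((n + 1).choose (k + 1) * (n + 1 + 1)) := by ring
    _ = _ := by rw [h₀, h₁, h₂]; ring

-- Indexed by `k = i + 1`, so that it runs over `1 ≤ k ≤ n`, the support of `D n`.
noncomputable def weightedSum (n : ℕ) (f : ℝ → ℝ) : ℝ :=
  ∑ i ∈ range n, f (i + 1) * tripleChoose n (i + 1)

section weightedSum

variable (n : ℕ)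

lemma weightedSum_add (f g : ℝ → ℝ) :
    weightedSum n (fun x => f x + g x) = weightedSum n f + weightedSum n g := by
  simp only [weightedSum, add_mul, sum_add_distrib]

lemma weightedSum_const_mul (c : ℝ) (f : ℝ → ℝ) :
    weightedSum n (fun x => c * f x) = c * weightedSum n f := by
  simp only [weightedSum, mul_sum, mul_assoc]

lemma weightedSum_const (c : ℝ) : weightedSum n (fun _ => c) = c * weightedSum n 1 := by
  simp only [weightedSum, mul_sum, Pi.one_apply, one_mul]

lemma weightedSum_mono {f g : ℝ → ℝ} (hfg : ∀ x, f x ≤ g x) :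
    weightedSum n f ≤ weightedSum n g :=
  sum_le_sum fun _ _ => mul_le_mul_of_nonneg_right (hfg _) (Nat.cast_nonneg _)

lemma two_mul_weightedSum (f : ℝ → ℝ) :
    2 * weightedSum n f = weightedSum n (fun x => f x + f (n + 1 - x)) := by
  rw [weightedSum_add, two_mul]
  congr 1
  refine (sum_range_reflect _ n).symm.trans (sum_congr rfl fun i hi => ?_)
  have hi := mem_range.1 hi
  rw [show n - 1 - i + 1 = n + 1 - (i + 1) by omega, tripleChoose_reflect (by omega) (by omega),
    Nat.cast_sub (by omega), Nat.cast_sub (by omega)]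
  push_cast
  ring_nf

lemma weightedSum_eq_of_reflect {f g : ℝ → ℝ}
    (hfg : ∀ x, f x + f (n + 1 - x) = g x + g (n + 1 - x)) :
    weightedSum n f = weightedSum n g := by
  refine mul_left_cancel₀ two_ne_zero ?_
  rw [two_mul_weightedSum, two_mul_weightedSum]
  simp only [hfg]

end weightedSum

lemma weightedSum_one_pos {n : ℕ} (hn : 1 ≤ n) : 0 < weightedSum n 1 := by
  refine sum_pos' (fun _ _ => mul_nonneg zero_le_one (Nat.cast_nonneg _)) ⟨0, mem_range.2 hn, ?_⟩
  have : 0 < tripleChoose n 1 :=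
    Nat.mul_pos (Nat.mul_pos (Nat.choose_pos (by omega)) (Nat.choose_pos (by omega)))
      (Nat.choose_pos (by omega))
  simpa using this

lemma cube_mul_weightedSum_one (n : ℕ) :
    ((n : ℝ) + 2) ^ 3 * weightedSum n 1 =
      weightedSum (n + 1) (fun x => (x - 1) * x * (x + 1)) := by
  rw [weightedSum, weightedSum, sum_range_succ', mul_sum]
  simp only [Pi.one_apply, one_mul, Nat.cast_zero, zero_add, sub_self, zero_mul, add_zero]
  refine sum_congr rfl fun i _ => ?_
  have h := cube_mul_tripleChoose_eq_succ_succ n (k := i + 1) (by omega)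
  rw [← Nat.cast_inj (R := ℝ)] at h
  push_cast at h ⊢
  linear_combination h

-- `6 (n+1) x (x-1) - 4 (x-1) x (x+1) - (n+1) n (n-1)` is odd about `(n + 1) / 2`.
lemma six_mul_weightedSum_descFactorial_two (n : ℕ) :
    6 * ((n : ℝ) + 1) * weightedSum n (fun x => x * (x - 1)) =
      4 * weightedSum n (fun x => (x - 1) * x * (x + 1)) +
        ((n : ℝ) + 1) * n * (n - 1) * weightedSum n 1 := by
  have h := weightedSum_eq_of_reflect n (f := fun x => 6 * ((n : ℝ) + 1) * (x * (x - 1)))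
    (g := fun x => 4 * ((x - 1) * x * (x + 1)) + ((n : ℝ) + 1) * n * (n - 1)) (fun x => by ring)
  rwa [weightedSum_const_mul, weightedSum_add, weightedSum_const_mul, weightedSum_const] at h

lemma sq_sub_one_div_four_mul_le_weightedSum (n : ℕ) :
    ((n : ℝ) ^ 2 - 1) / 4 * weightedSum n 1 ≤ weightedSum n (fun x => x * (x - 1)) := by
  have h := weightedSum_mono n (f := fun _ => ((n : ℝ) ^ 2 - 1) / 2)
    (g := fun x => x * (x - 1) + (n + 1 - x) * (n + 1 - x - 1))
    (fun x => by nlinarith [sq_nonneg (2 * x - n - 1)])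
  rw [weightedSum_const, ← two_mul_weightedSum] at h
  linarith

lemma two_mul_le_mul_add_of_eq_mul {X a b w w' M : ℝ} (ha : 0 ≤ a) (hb : 0 ≤ b) (hw : 0 ≤ w)
    (hM : 0 ≤ M) (hXa : X = w * a) (hXb : X = w' * b) (hww' : w * w' ≤ M ^ 2) :
    2 * X ≤ M * (a + b) := by
  have hX : 0 ≤ X := hXa ▸ mul_nonneg hw ha
  have hsq : X ^ 2 = (w * w') * (a * b) := by rw [sq]; nth_rw 1 [hXa]; rw [hXb]; ring
  have hab := four_mul_le_sq_add a b
  refine (pow_le_pow_iff_left₀ (by positivity) (by positivity) two_ne_zero).1 ?_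
  calc (2 * X) ^ 2 = 4 * (w * w') * (a * b) := by rw [mul_pow, hsq]; ring
    _ ≤ 4 * M ^ 2 * (a * b) := by gcongr
    _ ≤ (M * (a + b)) ^ 2 := by rw [mul_pow]; nlinarith [sq_nonneg M]

lemma mul_le_sq_half_of_add_eq {p q L : ℝ} (hpq : p + q = L) : p * q ≤ (L / 2) ^ 2 := by
  subst hpq
  linarith [four_mul_le_sq_add p q]

lemma sixteen_mul_tripleChoose_le {n k : ℕ} (hk : 1 ≤ k) (hkn : k ≤ n) :
    16 * ((n : ℝ) + 2) ^ 3 * tripleChoose n k ≤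
      ((n : ℝ) + 3) ^ 3 * (tripleChoose (n + 1) (k + 1) + tripleChoose (n + 1) k) := by
  have hk' : (1 : ℝ) ≤ k := by exact_mod_cast hk
  have hkn' : (k : ℝ) ≤ n := by exact_mod_cast hkn
  have hup := cube_mul_tripleChoose_eq_succ_succ n hk
  have hdown := cube_mul_tripleChoose_eq_succ n hk
  rw [← Nat.cast_inj (R := ℝ)] at hup hdown
  push_cast [Nat.cast_sub (by omega : k ≤ n + 1), Nat.cast_sub (by omega : k ≤ n + 2),
    Nat.cast_sub (by omega : k ≤ n + 3)] at hup hdown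
  have hL : (0 : ℝ) ≤ (((n : ℝ) + 3) / 2) ^ 2 := by positivity
  have hww' : (k * (k + 1) * (k + 2) : ℝ) * ((n + 1 - k) * (n + 2 - k) * (n + 3 - k)) ≤
      ((((n : ℝ) + 3) / 2) ^ 3) ^ 2 := by
    calc (k * (k + 1) * (k + 2) : ℝ) * ((n + 1 - k) * (n + 2 - k) * (n + 3 - k))
        = (k * (n + 3 - k)) * ((k + 1) * (n + 2 - k)) * ((k + 2) * (n + 1 - k)) := by ring
      _ ≤ (((n : ℝ) + 3) / 2) ^ 2 * (((n : ℝ) + 3) / 2) ^ 2 * (((n : ℝ) + 3) / 2) ^ 2 := by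
        refine mul_le_mul (mul_le_mul ?_ ?_ ?_ hL) ?_ ?_ (by positivity)
        all_goals first
          | exact mul_le_sq_half_of_add_eq (by ring)
          | exact mul_nonneg (by linarith) (by linarith)
      _ = _ := by ring
  have h := two_mul_le_mul_add_of_eq_mul (Nat.cast_nonneg _) (Nat.cast_nonneg _) (by positivity)
    (by positivity) hup hdown hww'
  linarith

lemma cube_mul_weightedSum_one_le (n : ℕ) :
    8 * ((n : ℝ) + 2) ^ 3 * weightedSum n 1 ≤ ((n : ℝ) + 3) ^ 3 * weightedSum (n + 1) 1 := by
  have hshift : ∑ i ∈ range n, (tripleChoose (n + 1) (i + 1 + 1) : ℝ) ≤ weightedSum (n + 1) 1 := by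
    simp only [weightedSum, Pi.one_apply, one_mul, sum_range_succ' _ n]
    exact le_add_of_nonneg_right (Nat.cast_nonneg _)
  have hsame : ∑ i ∈ range n, (tripleChoose (n + 1) (i + 1) : ℝ) ≤ weightedSum (n + 1) 1 := by
    simp only [weightedSum, Pi.one_apply, one_mul, sum_range_succ _ n]
    exact le_add_of_nonneg_right (Nat.cast_nonneg _)
  have hsum : 16 * ((n : ℝ) + 2) ^ 3 * weightedSum n 1 ≤ ((n : ℝ) + 3) ^ 3 *
      (∑ i ∈ range n, (tripleChoose (n + 1) (i + 1 + 1) : ℝ) +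
        ∑ i ∈ range n, (tripleChoose (n + 1) (i + 1) : ℝ)) := by
    simp only [weightedSum, Pi.one_apply, one_mul, mul_sum, ← sum_add_distrib]
    exact sum_le_sum fun i hi => sixteen_mul_tripleChoose_le (by omega) (mem_range.1 hi)
  have := mul_le_mul_of_nonneg_left (add_le_add hshift hsame)
    (by positivity : (0 : ℝ) ≤ (n + 3) ^ 3)
  linarith

lemma weightedSum_descFactorial_two_le (n : ℕ) :
    6 * ((n : ℝ) + 2) * weightedSum (n + 1) (fun x => x * (x - 1)) ≤
      (((n : ℝ) + 3) ^ 3 / 2 + (n + 2) * (n + 1) * n) * weightedSum (n + 1) 1 := by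
  have h := six_mul_weightedSum_descFactorial_two (n + 1)
  rw [← cube_mul_weightedSum_one] at h
  push_cast at h
  linarith [cube_mul_weightedSum_one_le n]

lemma abs_weightedSum_ratio_sub_le {n : ℕ} (hn : 1 ≤ n) :
    |weightedSum n (fun x => x * (x - 1)) / ((n : ℝ) ^ 2 * weightedSum n 1) - 1 / 4| ≤
      1 / (n : ℝ) := by
  obtain ⟨m, rfl⟩ : ∃ m, n = m + 1 := ⟨n - 1, by omega⟩
  have hlow := sq_sub_one_div_four_mul_le_weightedSum (m + 1)
  have hup := weightedSum_descFactorial_two_le m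
  have hT := weightedSum_one_pos (n := m + 1) (by omega)
  set E := weightedSum (m + 1) (fun x => x * (x - 1))
  set T := weightedSum (m + 1) 1
  push_cast at hlow ⊢
  have hm : (0 : ℝ) ≤ m := m.cast_nonneg
  have hN : (0 : ℝ) < 4 * ((m + 1) ^ 2 * T) := by positivity
  have hdev : |4 * E - (m + 1) ^ 2 * T| ≤ 4 * ((m + 1) * T) :=
    abs_le.2 ⟨by nlinarith, by nlinarith [mul_nonneg hm hT.le, mul_nonneg (mul_nonneg hm hm) hT.le]⟩
  calc |E / ((m + 1) ^ 2 * T) - 1 / 4| = |4 * E - (m + 1) ^ 2 * T| / (4 * ((m + 1) ^ 2 * T)) := by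
        rw [← abs_of_pos hN, ← abs_div]
        congr 1
        field_simp
    _ ≤ 4 * ((m + 1) * T) / (4 * ((m + 1) ^ 2 * T)) := by gcongr
    _ = 1 / (m + 1) := by field_simp

lemma D_eq_of_ne_zero (n : ℕ) {k : ℕ} (hk : k ≠ 0) :
    D n k = 2 / (n * (n + 1) ^ 2) * tripleChoose n k := by
  simp only [D, if_neg hk, tripleChoose]
  push_cast
  ring

lemma h_eq (n : ℕ) : h n = 2 / (n * (n + 1) ^ 2) * weightedSum n (fun x => x * (x - 1)) := by
  rw [h, sum_range_succ', weightedSum, mul_sum]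
  simp only [Nat.cast_zero, zero_mul, add_zero, Nat.cast_add, Nat.cast_one]
  refine sum_congr rfl fun i _ => ?_
  rw [D_eq_of_ne_zero n i.succ_ne_zero]
  ring

lemma B_eq {n : ℕ} (hn : n ≠ 0) : B n = 2 / (n * (n + 1) ^ 2) * weightedSum n 1 := by
  have hIcc : ∑ i ∈ range n, D n (i + 1) = ∑ k ∈ Icc 1 n, D n k := by
    rw [range_eq_Ico, sum_Ico_add', zero_add, Ico_add_one_right_eq_Icc]
  rw [B, if_neg hn, ← hIcc, weightedSum, mul_sum]
  refine sum_congr rfl fun i _ => ?_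
  rw [D_eq_of_ne_zero n i.succ_ne_zero, Pi.one_apply, one_mul]

lemma h_div_eq {n : ℕ} (hn : n ≠ 0) :
    h n / ((n : ℝ) ^ 2 * B n) =
      weightedSum n (fun x => x * (x - 1)) / ((n : ℝ) ^ 2 * weightedSum n 1) := by
  rw [h_eq, B_eq hn, mul_left_comm, mul_div_mul_left _ _ (by positivity)]

theorem baxter_second_moment_asymptotic :
    Filter.Tendsto (fun n : ℕ => h n / ((n : ℝ) ^ 2 * B n)) Filter.atTop (nhds (1 / 4)) := by
  rw [tendsto_iff_norm_sub_tendsto_zero]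
  refine squeeze_zero' (Filter.Eventually.of_forall fun _ => norm_nonneg _) ?_
    tendsto_one_div_atTop_nhds_zero_nat
  filter_upwards [Filter.eventually_ge_atTop 1] with n hn
  rw [Real.norm_eq_abs, h_div_eq (by omega)]
  exact abs_weightedSum_ratio_sub_le hn
end

section
/- There exists a constant C₁ > 0 such that B_n · n⁴ / 8ⁿ → C₁ as n → ∞; consequently B_n = Θ(8ⁿ/n⁴). -/
open Finset

/-!
Creative telescoping (Zeilberger's algorithm) applied to the hypergeometric summand gives the
recurrence `(n+2)(n+3) B n = (7n²+7n-2) B (n-1) + 8(n-1)(n-2) B (n-2)`. For the ratios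
`r n = B n / B (n-1)` it reads `r n = (7n²+7n-2 + 8(n-1)(n-2) / r (n-1)) / ((n+2)(n+3))`, a map
contracting by a factor about `1/8` near `8`, so `r n = 8 - 32/n + O(1/n²)`. Hence the ratios of
consecutive terms of `B n * n⁴ / 8ⁿ` are `1 + O(1/n²)`, their logarithms are summable, and the
sequence converges to a positive limit.
-/

open Filter Topology

theorem exists_pos_tendsto_of_summable_ratio_sub_one {a : ℕ → ℝ} (ha : ∀ n, 0 < a n)
    (hs : Summable fun n => a (n + 1) / a n - 1) : ∃ C, 0 < C ∧ Tendsto a atTop (𝓝 C) := by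
  have hlog : Summable fun n => Real.log (a (n + 1) / a n) := by
    simpa using Real.summable_log_one_add_of_summable hs
  have hpartial (n : ℕ) :
      ∑ k ∈ range n, Real.log (a (k + 1) / a k) = Real.log (a n) - Real.log (a 0) := by
    rw [← sum_range_sub (fun k => Real.log (a k))]
    exact sum_congr rfl fun k _ => Real.log_div (ha _).ne' (ha _).ne'
  have hloga : Tendsto (fun n => Real.log (a n)) atTop
      (𝓝 ((∑' n, Real.log (a (n + 1) / a n)) + Real.log (a 0))) := by
    refine (hlog.hasSum.tendsto_sum_nat.add_const (Real.log (a 0))).congr fun n => ?_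
    rw [hpartial]; ring
  refine ⟨_, Real.exp_pos _, (Real.continuous_exp.tendsto _ |>.comp hloga).congr fun n => ?_⟩
  exact Real.exp_log (ha n)

theorem exists_pos_tendsto_of_abs_ratio_sub_one_le {a : ℕ → ℝ} {K : ℝ}
    (ha : ∀ᶠ n in atTop, 0 < a n)
    (hK : ∀ᶠ n in atTop, |a (n + 1) / a n - 1| ≤ K / (n : ℝ) ^ 2) :
    ∃ C, 0 < C ∧ Tendsto a atTop (𝓝 C) := by
  obtain ⟨N, hN⟩ := eventually_atTop.1 (ha.and hK)
  have hsum : Summable fun n : ℕ => K / ((n + N : ℕ) : ℝ) ^ 2 := by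
    have h : Summable fun n : ℕ => K / (n : ℝ) ^ 2 := by
      simpa [div_eq_mul_inv] using (Real.summable_nat_pow_inv.2 one_lt_two).mul_left K
    exact (summable_nat_add_iff N).2 h
  obtain ⟨C, hC, hlim⟩ := exists_pos_tendsto_of_summable_ratio_sub_one (a := fun n => a (n + N))
    (fun n => (hN _ (by omega)).1)
    (hsum.of_norm_bounded fun n => by
      rw [Real.norm_eq_abs, add_right_comm]
      exact (hN (n + N) (by omega)).2)
  exact ⟨C, hC, (tendsto_add_atTop_iff_nat N).1 hlim⟩

theorem Nat.cast_choose_succ_right_eq (n k : ℕ) :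
    (n.choose (k + 1) : ℝ) * (k + 1) = n.choose k * (n - k) := by
  rcases le_or_gt k n with h | h
  · have := congrArg (Nat.cast : ℕ → ℝ) (Nat.choose_succ_right_eq n k)
    push_cast [Nat.cast_sub h] at this
    exact this
  · simp [Nat.choose_eq_zero_of_lt h, Nat.choose_eq_zero_of_lt (h.trans (Nat.lt_succ_self k))]

theorem Nat.cast_choose_mul_succ_eq (n k : ℕ) :
    (n.choose k : ℝ) * (n + 1) = (n + 1).choose k * (n + 1 - k) := by
  rcases le_or_gt k (n + 1) with h | h
  · have := congrArg (Nat.cast : ℕ → ℝ) (Nat.choose_mul_succ_eq n k)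
    push_cast [Nat.cast_sub h] at this
    exact this
  · simp [Nat.choose_eq_zero_of_lt h, Nat.choose_eq_zero_of_lt (Nat.lt_of_succ_lt h)]

noncomputable def baxterTerm (n j : ℕ) : ℝ :=
  ((n + 1).choose j : ℝ) * (n + 1).choose (j + 1) * (n + 1).choose (j + 2)

theorem baxterTerm_nonneg (n j : ℕ) : 0 ≤ baxterTerm n j := by
  unfold baxterTerm; positivity

theorem baxterTerm_eq_zero {n j : ℕ} (h : n ≤ j) : baxterTerm n j = 0 := by
  simp [baxterTerm, Nat.choose_eq_zero_of_lt (show n + 1 < j + 2 by omega)]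

theorem sum_range_baxterTerm {n N : ℕ} (hn : n ≠ 0) (hN : n ≤ N) :
    ∑ j ∈ range N, baxterTerm n j = n * (n + 1) ^ 2 / 2 * B n := by
  have hsub : ∑ j ∈ range N, baxterTerm n j = ∑ j ∈ range n, baxterTerm n j :=
    (sum_subset (range_subset_range.2 hN) fun j _ hj =>
      baxterTerm_eq_zero (by simpa using hj)).symm
  have hpos : (n : ℝ) * (n + 1) ^ 2 ≠ 0 := by positivity
  rw [hsub, B, if_neg hn, ← Ico_add_one_right_eq_Icc, sum_Ico_eq_sum_range, mul_sum,
    Nat.add_sub_cancel]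
  refine sum_congr rfl fun j _ => ?_
  rw [D, if_neg (by omega), show 1 + j - 1 = j by omega, show 1 + j = j + 1 by omega,
    baxterTerm]
  field_simp

theorem B_pos (n : ℕ) : 0 < B n := by
  rcases Nat.eq_zero_or_pos n with rfl | hn
  · simp [B]
  have hterm : 0 < baxterTerm n 0 := by
    have : (0 : ℝ) < (n + 1).choose 2 := by exact_mod_cast Nat.choose_pos (by omega)
    simp only [baxterTerm, zero_add, Nat.choose_zero_right, Nat.choose_one_right]
    positivity
  have hsum : 0 < ∑ j ∈ range n, baxterTerm n j :=
    sum_pos' (fun j _ => baxterTerm_nonneg n j) ⟨0, mem_range.2 hn, hterm⟩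
  rw [sum_range_baxterTerm hn.ne' le_rfl] at hsum
  exact pos_of_mul_pos_right hsum (by positivity)

theorem baxterTerm_succ_left (n j : ℕ) :
    ((n : ℝ) + 2) ^ 3 * baxterTerm n j
      = ((n : ℝ) + 2 - j) * (n + 1 - j) * (n - j) * baxterTerm (n + 1) j := by
  have h₀ := Nat.cast_choose_mul_succ_eq (n + 1) j
  have h₁ := Nat.cast_choose_mul_succ_eq (n + 1) (j + 1)
  have h₂ := Nat.cast_choose_mul_succ_eq (n + 1) (j + 2)
  simp only [baxterTerm]
  push_cast at h₀ h₁ h₂ ⊢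
  linear_combination
    ((n + 1).choose (j + 1) : ℝ) * (n + 1).choose (j + 2) * ((n : ℝ) + 2) ^ 2 * h₀
      + ((n + 2).choose j : ℝ) * (n + 1).choose (j + 2) * ((n : ℝ) + 2) * ((n : ℝ) + 2 - j) * h₁
      + ((n + 2).choose j : ℝ) * (n + 2).choose (j + 1) * ((n : ℝ) + 2 - j) * ((n : ℝ) + 1 - j)
        * h₂

theorem baxterTerm_succ_right (n j : ℕ) :
    ((j : ℝ) + 1) * (j + 2) * (j + 3) * baxterTerm n (j + 1)
      = ((n : ℝ) + 1 - j) * (n - j) * (n - 1 - j) * baxterTerm n j := by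
  have h₀ := Nat.cast_choose_succ_right_eq (n + 1) j
  have h₁ := Nat.cast_choose_succ_right_eq (n + 1) (j + 1)
  have h₂ := Nat.cast_choose_succ_right_eq (n + 1) (j + 2)
  simp only [baxterTerm]
  push_cast at h₀ h₁ h₂ ⊢
  linear_combination
    ((j : ℝ) + 2) * (j + 3) * (n + 1).choose (j + 2) * (n + 1).choose (j + 3) * h₀
      + ((n : ℝ) + 1 - j) * (j + 3) * (n + 1).choose j * (n + 1).choose (j + 3) * h₁
      + ((n : ℝ) + 1 - j) * (n - j) * (n + 1).choose j * (n + 1).choose (j + 1) * h₂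

/-- Zeilberger's certificate for the recurrence of `B`: a polynomial multiple of the summand. -/
noncomputable def baxterCertificate (n j : ℕ) : ℝ :=
  let N : ℝ := n + 2
  let k : ℝ := j + 1
  (k - 1) * k * (k + 1) *
    (4 * k ^ 3 - 6 * (3 * N + 2) * k ^ 2 + (27 * N ^ 2 + 39 * N + 8) * k
      - 2 * N * (7 * N ^ 2 + 16 * N + 7)) * baxterTerm (n + 2) j

theorem baxterTerm_telescoping (n j : ℕ) :
    let N : ℝ := n + 2
    N * (N + 1) * (N * (N - 1) * (N + 2) * (N + 3) * baxterTerm (n + 2) j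
        - (7 * N ^ 2 + 7 * N - 2) * (N + 1) ^ 2 * baxterTerm (n + 1) j
        - 8 * N ^ 2 * (N + 1) ^ 2 * baxterTerm n j)
      = baxterCertificate n (j + 1) - baxterCertificate n j := by
  intro N
  -- Each term becomes a polynomial multiple of `baxterTerm (n + 2) j`.
  have h₀ := baxterTerm_succ_left n j
  have h₁ := baxterTerm_succ_left (n + 1) j
  have hR := baxterTerm_succ_right (n + 2) j
  simp only [baxterCertificate, N]
  push_cast at h₁ hR ⊢
  linear_combination
    (-(((n : ℝ) + 2) * (7 * ((n : ℝ) + 2) ^ 2 + 7 * ((n : ℝ) + 2) - 2)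
      + 8 * ((n : ℝ) + 2 - j) * ((n : ℝ) + 1 - j) * ((n : ℝ) - j))) * h₁
    - 8 * ((n : ℝ) + 3) ^ 3 * h₀
    - (4 * ((j : ℝ) + 2) ^ 3 - 6 * (3 * ((n : ℝ) + 2) + 2) * ((j : ℝ) + 2) ^ 2
      + (27 * ((n : ℝ) + 2) ^ 2 + 39 * ((n : ℝ) + 2) + 8) * ((j : ℝ) + 2)
      - 2 * ((n : ℝ) + 2) * (7 * ((n : ℝ) + 2) ^ 2 + 16 * ((n : ℝ) + 2) + 7)) * hR

theorem sum_baxterTerm_recurrence (n : ℕ) :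
    let N : ℝ := n + 2
    N * (N - 1) * (N + 2) * (N + 3) * ∑ j ∈ range (n + 2), baxterTerm (n + 2) j
      - (7 * N ^ 2 + 7 * N - 2) * (N + 1) ^ 2 * ∑ j ∈ range (n + 2), baxterTerm (n + 1) j
      - 8 * N ^ 2 * (N + 1) ^ 2 * ∑ j ∈ range (n + 2), baxterTerm n j = 0 := by
  intro N
  have hN : N * (N + 1) ≠ 0 := by positivity
  have hcert_zero : baxterCertificate n 0 = 0 := by simp [baxterCertificate]
  have hcert_top : baxterCertificate n (n + 2) = 0 := by
    simp [baxterCertificate, baxterTerm_eq_zero le_rfl]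
  have hsum := sum_range_sub (baxterCertificate n) (n + 2)
  rw [hcert_zero, hcert_top, sub_zero, ← sum_congr rfl fun j _ => baxterTerm_telescoping n j,
    ← mul_sum] at hsum
  rw [← (mul_eq_zero.1 hsum).resolve_left hN]
  simp only [sum_sub_distrib, mul_sum]
  rfl

theorem B_recurrence {m : ℕ} (hm : 3 ≤ m) :
    ((m : ℝ) + 2) * (m + 3) * B m
      = (7 * (m : ℝ) ^ 2 + 7 * m - 2) * B (m - 1)
        + 8 * ((m : ℝ) - 1) * (m - 2) * B (m - 2) := by
  obtain ⟨n, rfl⟩ : ∃ n, m = n + 3 := ⟨m - 3, by omega⟩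
  have h := sum_baxterTerm_recurrence (n + 1)
  simp only [show n + 1 + 2 = n + 3 by rfl, show n + 1 + 1 = n + 2 by rfl] at h
  rw [sum_range_baxterTerm (by omega) le_rfl, sum_range_baxterTerm (by omega) (by omega),
    sum_range_baxterTerm (by omega) (by omega)] at h
  simp only [show n + 3 - 1 = n + 2 by omega, show n + 3 - 2 = n + 1 by omega]
  push_cast at h ⊢
  have hc : ((n : ℝ) + 3) ^ 2 * ((n : ℝ) + 4) ^ 2 * ((n : ℝ) + 2) / 2 ≠ 0 := by positivity
  refine mul_left_cancel₀ hc ?_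
  linear_combination h

theorem four_mul_B_le_B_succ {n : ℕ} (hn : 5 ≤ n) : 4 * B n ≤ B (n + 1) := by
  have h := B_recurrence (m := n + 1) (by omega)
  simp only [Nat.add_sub_cancel, show n + 1 - 2 = n - 1 by omega] at h
  push_cast at h
  have hn' : (5 : ℝ) ≤ n := by exact_mod_cast hn
  have hlast : 0 ≤ 8 * ((n : ℝ) + 1 - 1) * ((n : ℝ) + 1 - 2) * B (n - 1) :=
    mul_nonneg (mul_nonneg (by linarith) (by linarith)) (B_pos _).le
  have hcoef : 0 ≤ (3 * ((n : ℝ) + 1) ^ 2 - 13 * ((n : ℝ) + 1) - 26) * B n :=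
    mul_nonneg (by nlinarith) (B_pos n).le
  refine le_of_mul_le_mul_left (a := ((n : ℝ) + 1 + 2) * ((n : ℝ) + 1 + 3)) ?_ (by positivity)
  linarith

theorem B_succ_le_nine_mul_B {n : ℕ} (hn : 6 ≤ n) : B (n + 1) ≤ 9 * B n := by
  have h := B_recurrence (m := n + 1) (by omega)
  simp only [Nat.add_sub_cancel, show n + 1 - 2 = n - 1 by omega] at h
  push_cast at h
  have hn' : (6 : ℝ) ≤ n := by exact_mod_cast hn
  have hprev : 4 * B (n - 1) ≤ B n := by
    simpa [Nat.sub_add_cancel (by omega : 1 ≤ n)] using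
      four_mul_B_le_B_succ (n := n - 1) (by omega)
  have hlast : 8 * ((n : ℝ) + 1 - 1) * ((n : ℝ) + 1 - 2) * B (n - 1)
      ≤ 2 * ((n : ℝ) + 1 - 1) * ((n : ℝ) + 1 - 2) * B n := by
    have : (0 : ℝ) ≤ 2 * ((n : ℝ) + 1 - 1) * ((n : ℝ) + 1 - 2) := by nlinarith
    nlinarith
  have hcoef : 0 ≤ (44 * ((n : ℝ) + 1) + 52) * B n := mul_nonneg (by linarith) (B_pos n).le
  refine le_of_mul_le_mul_left (a := ((n : ℝ) + 1 + 2) * ((n : ℝ) + 1 + 3)) ?_ (by positivity)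
  nlinarith

theorem abs_ratio_step_sub_le {m s K : ℝ} (hm : 11 ≤ m) (hK : 160 ≤ K) (hs : 4 ≤ s)
    (hs' : |s - (8 - 32 / (m - 1))| ≤ K / (m - 1) ^ 2) :
    |((7 * m ^ 2 + 7 * m - 2) + 8 * (m - 1) * (m - 2) / s) / ((m + 2) * (m + 3)) - (8 - 32 / m)|
      ≤ K / m ^ 2 := by
  have hm5 : 0 < m - 5 := by linarith
  have hm1 : 0 < m - 1 := by linarith
  set s₀ := 8 - 32 / (m - 1) with hs₀_def
  have hs₀ : s₀ = 8 * (m - 5) / (m - 1) := by rw [hs₀_def]; field_simp; ring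
  have hs₀_pos : 0 < s₀ := by rw [hs₀]; positivity
  -- The first term is the defect of `8 - 32 / m` when `s = s₀`.
  have hsplit :
      ((7 * m ^ 2 + 7 * m - 2) + 8 * (m - 1) * (m - 2) / s) / ((m + 2) * (m + 3)) - (8 - 32 / m)
        = (120 * m ^ 2 - 360 * m - 960) / (m * (m - 5) * (m + 2) * (m + 3))
          + 8 * (m - 1) * (m - 2) / ((m + 2) * (m + 3)) * ((s₀ - s) / (s * s₀)) := by
    rw [hs₀]
    field_simp
    ring
  have hmain :
      |(120 * m ^ 2 - 360 * m - 960) / (m * (m - 5) * (m + 2) * (m + 3))| ≤ 120 / m ^ 2 := by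
    rw [abs_of_nonneg (div_nonneg (by nlinarith) (by positivity)),
      div_le_div_iff₀ (by positivity) (by positivity)]
    nlinarith
  have hcorr : |8 * (m - 1) * (m - 2) / ((m + 2) * (m + 3)) * ((s₀ - s) / (s * s₀))|
      ≤ K / (4 * m ^ 2) := calc
    _ = 8 * (m - 1) * (m - 2) / ((m + 2) * (m + 3)) * (|s - s₀| / (s * s₀)) := by
      rw [abs_mul, abs_of_nonneg (div_nonneg (by nlinarith) (by positivity)), abs_div,
        abs_of_pos (by positivity : 0 < s * s₀), abs_sub_comm]
    _ ≤ 8 * (m - 1) * (m - 2) / ((m + 2) * (m + 3)) * (K / (m - 1) ^ 2 / (4 * s₀)) := by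
      gcongr
      exact div_nonneg (by nlinarith) (by positivity)
    _ = K * (m - 2) / (4 * (m - 5) * (m + 2) * (m + 3)) := by rw [hs₀]; field_simp
    _ ≤ K / (4 * m ^ 2) := by
      have hcube : m ^ 2 * (m - 2) ≤ (m - 5) * (m + 2) * (m + 3) := by nlinarith
      rw [div_le_div_iff₀ (by positivity) (by positivity)]
      nlinarith [mul_le_mul_of_nonneg_left hcube (by linarith : 0 ≤ K)]
  calc _ ≤ 120 / m ^ 2 + K / (4 * m ^ 2) :=
        hsplit ▸ (abs_add_le _ _).trans (add_le_add hmain hcorr)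
    _ = (120 + K / 4) / m ^ 2 := by ring
    _ ≤ K / m ^ 2 := by gcongr; linarith

theorem B_succ_succ_div_B_succ {n : ℕ} (hn : 1 ≤ n) :
    B (n + 2) / B (n + 1)
      = ((7 * ((n : ℝ) + 2) ^ 2 + 7 * ((n : ℝ) + 2) - 2)
          + 8 * ((n : ℝ) + 1) * n / (B (n + 1) / B n)) / (((n : ℝ) + 4) * ((n : ℝ) + 5)) := by
  have h := B_recurrence (m := n + 2) (by omega)
  simp only [show n + 2 - 1 = n + 1 by omega, Nat.add_sub_cancel] at h
  push_cast at h
  have h₀ := (B_pos n).ne'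
  have h₁ := (B_pos (n + 1)).ne'
  field_simp
  linear_combination h

-- `484 = 4 * 11 ^ 2`: at `n = 10` the crude bounds `4 ≤ B 11 / B 10 ≤ 9` bound the error by `4`.
theorem abs_B_succ_div_B_sub_le {n : ℕ} (hn : 10 ≤ n) :
    |B (n + 1) / B n - (8 - 32 / ((n : ℝ) + 1))| ≤ 484 / ((n : ℝ) + 1) ^ 2 := by
  induction n, hn using Nat.le_induction with
  | base =>
    have hlow := four_mul_B_le_B_succ (n := 10) (by norm_num)
    have hhigh := B_succ_le_nine_mul_B (n := 10) (by norm_num)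
    have hpos := B_pos 10
    have h₄ : 4 ≤ B 11 / B 10 := (le_div_iff₀ hpos).2 (by linarith)
    have h₉ : B 11 / B 10 ≤ 9 := (div_le_iff₀ hpos).2 (by linarith)
    rw [abs_le]
    norm_num
    constructor <;> linarith
  | succ n hn ih =>
    have hn' : (10 : ℝ) ≤ n := by exact_mod_cast hn
    have hs : 4 ≤ B (n + 1) / B n :=
      (le_div_iff₀ (B_pos n)).2 (by linarith [four_mul_B_le_B_succ (n := n) (by omega)])
    have hstep := abs_ratio_step_sub_le (m := (n : ℝ) + 2) (K := 484) (by linarith) (by norm_num)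
      hs (by rw [show (n : ℝ) + 2 - 1 = n + 1 by ring]; exact ih)
    rw [B_succ_succ_div_B_succ (by omega)]
    push_cast
    convert hstep using 2 <;> ring

theorem abs_B_mul_pow_div_ratio_sub_one_le {n : ℕ} (hn : 10 ≤ n) :
    |(B (n + 1) * ((n + 1 : ℕ) : ℝ) ^ 4 / 8 ^ (n + 1)) / (B n * (n : ℝ) ^ 4 / 8 ^ n) - 1|
      ≤ 100 / (n : ℝ) ^ 2 := by
  have hn' : (10 : ℝ) ≤ n := by exact_mod_cast hn
  have hB := (B_pos n).ne'
  have hn₀ : (n : ℝ) ≠ 0 := by positivity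
  set m : ℝ := (n : ℝ) + 1 with hm
  set e := B (n + 1) / B n - (8 - 32 / m) with he
  have hratio :
      (B (n + 1) * ((n + 1 : ℕ) : ℝ) ^ 4 / 8 ^ (n + 1)) / (B n * (n : ℝ) ^ 4 / 8 ^ n) - 1
      = (e * m ^ 4 - 48 * m ^ 2 + 32 * m - 8) / (8 * (n : ℝ) ^ 4) := by
    rw [he, hm, pow_succ]
    push_cast
    field_simp
    ring
  have he_bound : |e| * m ^ 2 ≤ 484 :=
    (le_div_iff₀ (by positivity)).1 (abs_B_succ_div_B_sub_le hn)
  have hnum : |e * m ^ 4 - 48 * m ^ 2 + 32 * m - 8| ≤ 532 * m ^ 2 := calc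
    _ = |e * m ^ 4 + (-48 * m ^ 2 + 32 * m - 8)| := by ring_nf
    _ ≤ |e * m ^ 4| + |-48 * m ^ 2 + 32 * m - 8| := abs_add_le _ _
    _ ≤ 484 * m ^ 2 + 48 * m ^ 2 := by
      gcongr
      · rw [abs_mul, abs_of_nonneg (by positivity : 0 ≤ m ^ 4)]
        nlinarith [sq_nonneg m]
      · rw [abs_le]; constructor <;> nlinarith
    _ = 532 * m ^ 2 := by ring
  rw [hratio, abs_div, abs_of_pos (by positivity : (0 : ℝ) < 8 * n ^ 4),
    div_le_div_iff₀ (by positivity) (by positivity)]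
  have hm_le : 532 * m ^ 2 ≤ 800 * (n : ℝ) ^ 2 := by nlinarith
  nlinarith [mul_le_mul_of_nonneg_right (hnum.trans hm_le) (by positivity : (0 : ℝ) ≤ n ^ 2)]

theorem baxter_asymptotic_growth :
    ∃ C : ℝ, 0 < C ∧
      Filter.Tendsto (fun n : ℕ => B n * (n : ℝ) ^ 4 / 8 ^ n) Filter.atTop (nhds C) := by
  refine exists_pos_tendsto_of_abs_ratio_sub_one_le (K := 100) ?_ ?_
  · filter_upwards [eventually_ge_atTop 1] with n hn
    have := B_pos n
    have : (0 : ℝ) < n := by exact_mod_cast hn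
    positivity
  · filter_upwards [eventually_ge_atTop 10] with n hn
    exact abs_B_mul_pow_div_ratio_sub_one_le hn
end
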